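/- arXiv:1905.02987 — 2 statements merged into one kernel-verified Lean document; each statement's English description precedes it below -/
import Mathlib

section
/- Suppose u_Y(X;t), indexed by X, Y ∈ ℤ^N and t ≥ 0, are real-valued functions differentiable in t that satisfy, for all X, Y ∈ ℤ^N: the free equation d/dt u_Y(X;t) = Σ_{i=1}^N [p·u_Y(X_i^−;t) + q·u_Y(X_i^+;t) − u_Y(X;t)]; the boundary condition u_Y(X;t) = p·u_Y(X_1^−;t) + q·u_Y(X_N^+;t) whenever x_N + 1 = x_1 + L; and the boundary conditions u_Y(X;t) = p·u_Y(X_i^−;t) + q·u_Y(X_{i−1}^+;t) whenever x_i = x_{i−1} + 1, for i = 2,…,N. Then, for all X = (x_1,…,x_N) ∈ 𝒳_N(L) and Y ∈ 𝒳_N(L), u_Y satisfies the ASEP master equation: d/dt u_Y(X;t) = Σ_{i=2}^N (p·u_Y(X_i^−;t) − q·u_Y(X;t))·1[x_{i−1} ≠ x_i − 1] + (p·u_Y(X_1^−;t) − q·u_Y(X;t))·1[x_N ≠ x_1 + L − 1] + Σ_{i=1}^{N−1} (q·u_Y(X_i^+;t) − p·u_Y(X;t))·1[x_{i+1} ≠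 x_i + 1] + (q·u_Y(X_N^+;t) − p·u_Y(X;t))·1[x_1 ≠ x_N − L + 1]. -/
/-!
Since `p + q = 1`, the free generator splits into jump terms,
`p u(X_i^-) + q u(X_i^+) - u(X) = (p u(X_i^-) - q u(X)) + (q u(X_i^+) - p u(X))`,
and summing over particles pairs the left jump of particle `i` with the right jump of
particle `i - 1` (cyclically, so particle `1` is paired with particle `N` across the seam of
the ring). When that bond is occupied, the pair sums to `p u(X_i^-) + q u(X_{i-1}^+) - u(X)`,
which the boundary condition makes zero; dropping these pairs is exactly what the indicators of
the master equation do.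
-/

open scoped BigOperators

noncomputable section

/-- The configuration space `𝒳_N(L)`: strictly increasing with `x_N < x_1 + L`. -/
def ASEPconf (L : ℕ) {N : ℕ} (X : Fin N → ℤ) : Prop :=
  StrictMono X ∧ ∀ i j : Fin N, X j < X i + (L : ℤ)

/-- `X_i^−`. -/
def updM {N : ℕ} (X : Fin N → ℤ) (i : Fin N) : Fin N → ℤ := Function.update X i (X i - 1)

/-- `X_i^+`. -/
def updP {N : ℕ} (X : Fin N → ℤ) (i : Fin N) : Fin N → ℤ := Function.update X i (X i + 1)

section JumpTerms

variable {R : Type*} [CommRing R] {p q a b c : R}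

theorem free_rate_eq_add_jump_rates (hpq : p + q = 1) :
    p * a + q * b - c = (p * a - q * c) + (q * b - p * c) := by
  linear_combination c * hpq

theorem ite_jump_rates_add_eq {P Q : Prop} [Decidable P] [Decidable Q] (hPQ : P ↔ Q)
    (hpq : p + q = 1) (hbdry : ¬P → c = p * a + q * b) :
    ((if P then p * a - q * c else 0) + if Q then q * b - p * c else 0)
      = (p * a - q * c) + (q * b - p * c) := by
  by_cases hP : P
  · rw [if_pos hP, if_pos (hPQ.mp hP)]
  · rw [if_neg hP, if_neg (mt hPQ.mpr hP), hbdry hP]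
    linear_combination (p * a + q * b) * hpq

theorem sum_ite_jump_rates_add_eq {ι : Type*} {s : Finset ι} {P Q : ι → Prop}
    [DecidablePred P] [DecidablePred Q] {a b : ι → R} (hpq : p + q = 1)
    (hPQ : ∀ i, P i ↔ Q i) (hbdry : ∀ i, ¬P i → c = p * a i + q * b i) :
    ((∑ i ∈ s, if P i then p * a i - q * c else 0) + ∑ i ∈ s, if Q i then q * b i - p * c else 0)
      = (∑ i ∈ s, (p * a i - q * c)) + ∑ i ∈ s, (q * b i - p * c) := by
  simp only [← Finset.sum_add_distrib]
  exact Finset.sum_congr rfl fun i _ => ite_jump_rates_add_eq (hPQ i) hpq (hbdry i)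

end JumpTerms

section BondSums

variable {M : Type*} [AddCommMonoid M] {n : ℕ}

theorem sum_ite_pos_val_eq_sum_castSucc_succ (f : Fin (n + 1) → Fin (n + 1) → M) :
    (∑ i : Fin (n + 1), if 0 < i.val then
        f ⟨i.val - 1, lt_of_le_of_lt (Nat.sub_le _ _) i.isLt⟩ i else 0)
      = ∑ j : Fin n, f j.castSucc j.succ := by
  rw [Fin.sum_univ_succ]
  simp only [Fin.val_zero, lt_irrefl, if_false, Fin.val_succ, Nat.succ_pos, if_true, zero_add]
  rfl

theorem sum_dite_val_succ_lt_eq_sum_castSucc_succ (f : Fin (n + 1) → Fin (n + 1) → M) :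
    (∑ i : Fin (n + 1), if h : i.val + 1 < n + 1 then f i ⟨i.val + 1, h⟩ else 0)
      = ∑ j : Fin n, f j.castSucc j.succ := by
  rw [Fin.sum_univ_castSucc]
  simp only [Fin.val_castSucc, Fin.val_last, lt_irrefl, dif_neg, not_false_eq_true,
    add_lt_add_iff_right, Fin.is_lt, dif_pos, add_zero]
  rfl

end BondSums

theorem asep_free_plus_boundary_implies_master_general
    (N L : ℕ) (hN : 1 ≤ N)
    (p q : ℝ) (hpq : p + q = 1)
    (u : (Fin N → ℤ) → (Fin N → ℤ) → ℝ → ℝ)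
    (hfree : ∀ (Y X : Fin N → ℤ) (t : ℝ), 0 ≤ t →
      HasDerivWithinAt (fun s : ℝ => u Y X s)
        (∑ i : Fin N, (p * u Y (updM X i) t + q * u Y (updP X i) t - u Y X t))
        (Set.Ici (0 : ℝ)) t)
    (hbdry1 : ∀ (Y X : Fin N → ℤ) (t : ℝ), 0 ≤ t →
      X ⟨N - 1, Nat.sub_lt hN Nat.one_pos⟩ + 1 = X ⟨0, hN⟩ + (L : ℤ) →
      u Y X t = p * u Y (updM X ⟨0, hN⟩) t
        + q * u Y (updP X ⟨N - 1, Nat.sub_lt hN Nat.one_pos⟩) t)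
    (hbdry2 : ∀ (Y X : Fin N → ℤ) (t : ℝ), 0 ≤ t → ∀ i : Fin N, 0 < i.val →
      X i = X ⟨i.val - 1, lt_of_le_of_lt (Nat.sub_le _ _) i.isLt⟩ + 1 →
      u Y X t = p * u Y (updM X i) t
        + q * u Y (updP X ⟨i.val - 1, lt_of_le_of_lt (Nat.sub_le _ _) i.isLt⟩) t)
    (X Y : Fin N → ℤ) (t : ℝ) (ht : 0 ≤ t) :
    HasDerivWithinAt (fun s : ℝ => u Y X s)
      ((∑ i : Fin N,
          if 0 < i.val then
            (if X ⟨i.val - 1, lt_of_le_of_lt (Nat.sub_le _ _) i.isLt⟩ ≠ X i - 1 then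
              p * u Y (updM X i) t - q * u Y X t
            else 0)
          else 0) +
        (if X ⟨N - 1, Nat.sub_lt hN Nat.one_pos⟩ ≠ X ⟨0, hN⟩ + (L : ℤ) - 1 then
          p * u Y (updM X ⟨0, hN⟩) t - q * u Y X t
        else 0) +
        (∑ i : Fin N,
          if h : i.val + 1 < N then
            (if X ⟨i.val + 1, h⟩ ≠ X i + 1 then
              q * u Y (updP X i) t - p * u Y X t
            else 0)
          else 0) +
        (if X ⟨0, hN⟩ ≠ X ⟨N - 1, Nat.sub_lt hN Nat.one_pos⟩ - (L : ℤ) + 1 then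
          q * u Y (updP X ⟨N - 1, Nat.sub_lt hN Nat.one_pos⟩) t - p * u Y X t
        else 0))
      (Set.Ici (0 : ℝ)) t := by
  obtain ⟨n, rfl⟩ : ∃ n, N = n + 1 := ⟨N - 1, by omega⟩
  have hlast : (⟨n + 1 - 1, Nat.sub_lt hN Nat.one_pos⟩ : Fin (n + 1)) = Fin.last n := rfl
  have hzero : (⟨0, hN⟩ : Fin (n + 1)) = 0 := rfl
  rw [hlast, hzero] at hbdry1 ⊢
  -- group the jump terms by bond: the `n` bonds inside `Fin (n + 1)`, then the seam bond
  rw [sum_ite_pos_val_eq_sum_castSucc_succ fun k i =>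
      if X k ≠ X i - 1 then p * u Y (updM X i) t - q * u Y X t else 0,
    sum_dite_val_succ_lt_eq_sum_castSucc_succ fun i k =>
      if X k ≠ X i + 1 then q * u Y (updP X i) t - p * u Y X t else 0,
    add_right_comm (Finset.sum _ _), add_assoc (_ + _), sum_ite_jump_rates_add_eq hpq,
    ite_jump_rates_add_eq _ hpq]
  · convert hfree Y X t ht using 1
    simp only [free_rate_eq_add_jump_rates hpq, Finset.sum_add_distrib]
    rw [Fin.sum_univ_succ, Fin.sum_univ_castSucc]
    ring
  · exact fun hocc => hbdry1 Y X t ht (by omega)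
  · omega
  · exact fun j => by omega
  · exact fun j hocc => hbdry2 Y X t ht j.succ j.succ_pos
      (show X j.succ = X j.castSucc + 1 by omega)

/-- **Lemma (coordinate Bethe ansatz reduction for the ASEP on a ring).**
If the functions `u_Y(X;t)` satisfy the free equation together with the boundary conditions,
then for configurations `X, Y ∈ 𝒳_N(L)` they satisfy the ASEP master equation. -/
theorem asep_free_plus_boundary_implies_master
    (N L : ℕ) (hN : 1 ≤ N) (hNL : N ≤ L)
    (p q : ℝ) (hp0 : 0 < p) (hp1 : p < 1) (hq0 : 0 < q) (hq1 : q < 1) (hpq : p + q = 1)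
    (u : (Fin N → ℤ) → (Fin N → ℤ) → ℝ → ℝ)
    (hfree : ∀ (Y X : Fin N → ℤ) (t : ℝ), 0 ≤ t →
      HasDerivWithinAt (fun s : ℝ => u Y X s)
        (∑ i : Fin N, (p * u Y (updM X i) t + q * u Y (updP X i) t - u Y X t))
        (Set.Ici (0 : ℝ)) t)
    (hbdry1 : ∀ (Y X : Fin N → ℤ) (t : ℝ), 0 ≤ t →
      X ⟨N - 1, Nat.sub_lt hN Nat.one_pos⟩ + 1 = X ⟨0, hN⟩ + (L : ℤ) →
      u Y X t = p * u Y (updM X ⟨0, hN⟩) t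
        + q * u Y (updP X ⟨N - 1, Nat.sub_lt hN Nat.one_pos⟩) t)
    (hbdry2 : ∀ (Y X : Fin N → ℤ) (t : ℝ), 0 ≤ t → ∀ i : Fin N, 0 < i.val →
      X i = X ⟨i.val - 1, lt_of_le_of_lt (Nat.sub_le _ _) i.isLt⟩ + 1 →
      u Y X t = p * u Y (updM X i) t
        + q * u Y (updP X ⟨i.val - 1, lt_of_le_of_lt (Nat.sub_le _ _) i.isLt⟩) t)
    (X Y : Fin N → ℤ) (hX : ASEPconf L X) (hY : ASEPconf L Y) (t : ℝ) (ht : 0 ≤ t) :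
    HasDerivWithinAt (fun s : ℝ => u Y X s)
      ((∑ i : Fin N,
          if 0 < i.val then
            (if X ⟨i.val - 1, lt_of_le_of_lt (Nat.sub_le _ _) i.isLt⟩ ≠ X i - 1 then
              p * u Y (updM X i) t - q * u Y X t
            else 0)
          else 0) +
        (if X ⟨N - 1, Nat.sub_lt hN Nat.one_pos⟩ ≠ X ⟨0, hN⟩ + (L : ℤ) - 1 then
          p * u Y (updM X ⟨0, hN⟩) t - q * u Y X t
        else 0) +
        (∑ i : Fin N,
          if h : i.val + 1 < N then
            (if X ⟨i.val + 1, h⟩ ≠ X i + 1 then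
              q * u Y (updP X i) t - p * u Y X t
            else 0)
          else 0) +
        (if X ⟨0, hN⟩ ≠ X ⟨N - 1, Nat.sub_lt hN Nat.one_pos⟩ - (L : ℤ) + 1 then
          q * u Y (updP X ⟨N - 1, Nat.sub_lt hN Nat.one_pos⟩) t - p * u Y X t
        else 0))
      (Set.Ici (0 : ℝ)) t :=
  asep_free_plus_boundary_implies_master_general N L hN p q hpq u hfree hbdry1 hbdry2 X Y t ht
end
end

section
/- For every n ≥ 1, 0 ≤ s ≤ n, every t ∈ ℂ, and all complex w_1,…,w_n with q·w_i ≠ w_j for all i ≠ j: Σ_{I ⊆ {1,…,n}, |I| = s} B_s(w_I) · B_{n−s}(w_{I^c}) · (∏_{j∈I^c} (1 − t·w_j)) · G(I, I^c) = B_n(w_1,…,w_n) Σ_{k=0}^{n−s} (−1)^k [n−k choose s]_q e_k(w_1,…,w_n) t^k, where I^c = {1,…,n} \ I, e_k is the k-th elementary symmetric polynomial, and w_I denotes the variables with indices in I listed in increasing order. -/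
open scoped BigOperators

noncomputable section

/-- The q-deformed factorial `[m]_q!`. -/
def qfact (q : ℝ) (m : ℕ) : ℝ := (∏ j ∈ Finset.Icc 1 m, (1 - q ^ j)) / (1 - q) ^ m

/-- The Gaussian binomial coefficient `[n choose k]_q`. -/
def qbinom (q : ℝ) (n k : ℕ) : ℝ :=
  if k ≤ n then qfact q n / (qfact q k * qfact q (n - k)) else 0

/-- `B_{|S|}(w_S) = ∏_{i<j ∈ S} (w_i − w_j)/(q w_i − w_j)`. -/
def Bfin (q : ℝ) {n : ℕ} (w : Fin n → ℂ) (S : Finset (Fin n)) : ℂ :=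
  ∏ i ∈ S, ∏ j ∈ S, if i < j then (w i - w j) / ((q : ℂ) * w i - w j) else 1

/-- `G(S, T) = ∏_{α∈S, β∈T, α>β} ( −(q w_α − w_β)/(q w_β − w_α) )`. -/
def Gpair (q : ℝ) {n : ℕ} (w : Fin n → ℂ) (S T : Finset (Fin n)) : ℂ :=
  ∏ a ∈ S, ∏ b ∈ T,
    if b < a then -(((q : ℂ) * w a - w b) / ((q : ℂ) * w b - w a)) else 1

/-- The elementary symmetric polynomial `e_k(w_1,…,w_n)`. -/
def esym {n : ℕ} (w : Fin n → ℂ) (k : ℕ) : ℂ :=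
  ∑ S ∈ Finset.powersetCard k (Finset.univ : Finset (Fin n)), ∏ a ∈ S, w a

/-!
For `w` with distinct nonzero entries, splitting the pairs `i < j` of `B_n(w)` according to
`I` and its complement gives `B_s(w_I) B_{n-s}(w_{Iᶜ}) G(I, Iᶜ) = B_n(w) ∏_{a ∈ I, b ∉ I}
(q w_a - w_b) / (w_a - w_b)`, so the identity becomes one between two polynomials in `t` of
degree at most `n - s`. These are compared at the `n` points `t = 1 / w_j`: there the subsets
`I` missing `j` contribute nothing, the others reduce to the same identity for the `n - 1`
remaining variables, at `s - 1` and `t = 1 / (q w_j)`, and the `q`-Pascal rule matches the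
right hand sides, so induction on `s` applies (at `s = 0` both sides expand `∏ (1 - t w_b)`).
Both sides are continuous wherever `q w_i ≠ w_j`, and perturbing `w` along `w + ε v` reaches
the distinct nonzero case, which gives the general one.
-/

open Finset Polynomial

section QBinomial

variable {q : ℝ}

lemma one_sub_pow_ne_zero (hq : |q| < 1) {j : ℕ} (hj : j ≠ 0) : 1 - q ^ j ≠ 0 :=
  (sub_pos.2 <| (le_abs_self _).trans_lt <| by
    rw [abs_pow]; exact pow_lt_one₀ (abs_nonneg q) hq hj).ne'

lemma qfact_ne_zero (hq : |q| < 1) (m : ℕ) : qfact q m ≠ 0 :=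
  div_ne_zero (prod_ne_zero_iff.2 fun j hj => one_sub_pow_ne_zero hq (by grind))
    (pow_ne_zero _ (by simpa using one_sub_pow_ne_zero hq one_ne_zero))

lemma qfact_succ (hq : q ≠ 1) (m : ℕ) :
    qfact q (m + 1) = qfact q m * ((1 - q ^ (m + 1)) / (1 - q)) := by
  have : 1 - q ≠ 0 := sub_ne_zero.mpr hq.symm
  rw [qfact, qfact, prod_Icc_succ_top (by omega), pow_succ]
  field_simp
  ring

lemma qfact_zero : qfact q 0 = 1 := by
  simp [qfact]

lemma qbinom_zero_right (hq : |q| < 1) (m : ℕ) : qbinom q m 0 = 1 := by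
  simp [qbinom, qfact_zero, qfact_ne_zero hq]

lemma qbinom_self (hq : |q| < 1) (m : ℕ) : qbinom q m m = 1 := by
  simp [qbinom, qfact_zero, qfact_ne_zero hq]

lemma qbinom_of_lt {m k : ℕ} (h : m < k) : qbinom q m k = 0 := by
  simp [qbinom, Nat.not_le.mpr h]

lemma qbinom_succ_succ (hq : |q| < 1) {N s : ℕ} (h : s ≤ N) :
    qbinom q (N + 1) (s + 1) = qbinom q N (s + 1) + q ^ (N - s) * qbinom q N s := by
  obtain rfl | hlt := eq_or_lt_of_le h
  · simp [qbinom_self hq, qbinom_of_lt (Nat.lt_succ_self s)]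
  obtain ⟨d, rfl⟩ : ∃ d, N = s + d + 1 := ⟨N - s - 1, by omega⟩
  have hq1 : q ≠ 1 := fun h => by simp [h] at hq
  rw [qbinom, qbinom, qbinom, if_pos (by omega), if_pos (by omega), if_pos (by omega),
    show s + d + 1 + 1 - (s + 1) = d + 1 by omega, show s + d + 1 - (s + 1) = d by omega,
    show s + d + 1 - s = d + 1 by omega, qfact_succ hq1 (s + d + 1), qfact_succ hq1 s,
    qfact_succ hq1 d]
  have := qfact_ne_zero hq s
  have := qfact_ne_zero hq d
  have := qfact_ne_zero hq (s + d + 1)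
  have := one_sub_pow_ne_zero hq (Nat.succ_ne_zero s)
  have := one_sub_pow_ne_zero hq (Nat.succ_ne_zero d)
  have : 1 - q ≠ 0 := sub_ne_zero.mpr hq1.symm
  field_simp
  ring

/-- The `q`-Pascal step on the right hand side: `E'` and `E` stand for the elementary symmetric
functions of `insert j A` and of `A`, `x = w j` and `y = (w j)⁻¹`. -/
lemma sum_qbinom_shift (hq : |q| < 1) (hq0 : q ≠ 0) {N s : ℕ} (hs : s ≤ N)
    (E E' : ℕ → ℂ) {x y : ℂ} (hxy : x * y = 1) (h0 : E' 0 = E 0)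
    (hsucc : ∀ k, E' (k + 1) = E (k + 1) + x * E k) :
    ∑ k ∈ range (N - s + 1),
        (-1) ^ k * ((qbinom q (N + 1 - k) (s + 1) : ℝ) : ℂ) * E' k * y ^ k
      = (q : ℂ) ^ (N - s) * ∑ k ∈ range (N - s + 1),
          (-1) ^ k * ((qbinom q (N - k) s : ℝ) : ℂ) * E k * ((q : ℂ)⁻¹ * y) ^ k := by
  set m := N - s
  let g k := (-1) ^ k * ((qbinom q (N + 1 - k) (s + 1) : ℝ) : ℂ) * E k * y ^ k
  let h k := (-1) ^ k * ((qbinom q (N - k) (s + 1) : ℝ) : ℂ) * E k * y ^ k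
  have hshift : ∀ k, (-1) ^ (k + 1) * ((qbinom q (N + 1 - (k + 1)) (s + 1) : ℝ) : ℂ)
      * E' (k + 1) * y ^ (k + 1) = g (k + 1) - h k := fun k => by
    simp only [g, h, hsucc, Nat.add_sub_add_right]
    linear_combination -(-1) ^ k * ((qbinom q (N - k) (s + 1) : ℝ) : ℂ) * E k * y ^ k * hxy
  have hm : h m = 0 := by simp [h, m, show N - (N - s) = s by omega, qbinom_of_lt]
  have hpascal : ∀ k ∈ range (m + 1), g k - h k = (q : ℂ) ^ m
      * ((-1) ^ k * ((qbinom q (N - k) s : ℝ) : ℂ) * E k * ((q : ℂ)⁻¹ * y) ^ k) := by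
    intro k hk
    have hk : k ≤ m := Nat.lt_succ_iff.mp (mem_range.mp hk)
    have := qbinom_succ_succ hq (show s ≤ N - k by omega)
    rw [show N - k + 1 = N + 1 - k by omega, show N - k - s = m - k by omega] at this
    have hqC : (q : ℂ) ≠ 0 := Complex.ofReal_ne_zero.mpr hq0
    simp only [g, h, this]
    rw [mul_pow, inv_pow, ← pow_sub_mul_pow (q : ℂ) hk]
    field_simp
    push_cast
    ring
  rw [sum_range_succ', sum_congr rfl fun k _ => hshift k, sum_sub_distrib, h0, mul_sum,
    ← sum_congr rfl hpascal, sum_sub_distrib, sum_range_succ' g, sum_range_succ h, hm]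
  simp only [g, pow_zero, Nat.sub_zero]
  ring

end QBinomial

section CrossPoly

variable {ι : Type*} (q : ℝ) (w : ι → ℂ)

def qbinomEsymmPoly (A : Finset ι) (s : ℕ) : ℂ[X] :=
  ∑ k ∈ range (#A - s + 1),
    C ((-1) ^ k * ((qbinom q (#A - k) s : ℝ) : ℂ) * (A.val.map w).esymm k) * X ^ k

lemma eval_qbinomEsymmPoly (A : Finset ι) (s : ℕ) (t : ℂ) :
    (qbinomEsymmPoly q w A s).eval t = ∑ k ∈ range (#A - s + 1),
      (-1) ^ k * ((qbinom q (#A - k) s : ℝ) : ℂ) * (A.val.map w).esymm k * t ^ k := by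
  simp [qbinomEsymmPoly, eval_finsetSum]

lemma natDegree_qbinomEsymmPoly_le (A : Finset ι) (s : ℕ) :
    (qbinomEsymmPoly q w A s).natDegree ≤ #A - s :=
  natDegree_sum_le_of_forall_le _ _ fun _ hk =>
    (natDegree_C_mul_X_pow_le _ _).trans (Nat.lt_succ_iff.mp (mem_range.mp hk))

def qCross (S T : Finset ι) : ℂ :=
  ∏ a ∈ S, ∏ b ∈ T, ((q : ℂ) * w a - w b) / (w a - w b)

variable [DecidableEq ι]

def crossPoly (A : Finset ι) (s : ℕ) : ℂ[X] :=
  ∑ I ∈ A.powersetCard s, C (qCross q w I (A \ I)) * ∏ b ∈ A \ I, (1 - C (w b) * X)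

lemma eval_crossPoly (A : Finset ι) (s : ℕ) (t : ℂ) :
    (crossPoly q w A s).eval t
      = ∑ I ∈ A.powersetCard s, qCross q w I (A \ I) * ∏ b ∈ A \ I, (1 - t * w b) := by
  simp [crossPoly, eval_finsetSum, eval_prod, mul_comm (w _)]

lemma natDegree_crossPoly_le (A : Finset ι) (s : ℕ) :
    (crossPoly q w A s).natDegree ≤ #A - s := by
  refine natDegree_sum_le_of_forall_le _ _ fun I hI => (natDegree_C_mul_le _ _).trans ?_
  obtain ⟨hIA, hIs⟩ := mem_powersetCard.1 hI
  calc (∏ b ∈ A \ I, (1 - C (w b) * X)).natDegree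
      ≤ ∑ b ∈ A \ I, (1 - C (w b) * X).natDegree := natDegree_prod_le _ _
    _ ≤ ∑ _b ∈ A \ I, 1 := by gcongr; compute_degree
    _ = #A - s := by rw [sum_const, smul_eq_mul, mul_one, card_sdiff_of_subset hIA, hIs]

variable {q w}

lemma crossPoly_zero (hq : |q| < 1) (A : Finset ι) :
    crossPoly q w A 0 = qbinomEsymmPoly q w A 0 := by
  have hterm : ∀ k ∈ range (#A + 1), ∑ T ∈ A.powersetCard k, ∏ b ∈ T, -(C (w b) * X)
      = C ((-1) ^ k * ((qbinom q (#A - k) 0 : ℝ) : ℂ) * (A.val.map w).esymm k) * X ^ k := by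
    intro k _
    rw [qbinom_zero_right hq, Finset.esymm_map_val, Complex.ofReal_one, mul_one, mul_sum,
      map_sum, sum_mul]
    refine sum_congr rfl fun T hT => ?_
    rw [prod_neg, prod_mul_distrib, prod_const, (mem_powersetCard.1 hT).2, map_mul, map_prod]
    simp only [map_pow, map_neg, map_one]
    ring
  simp only [crossPoly, qbinomEsymmPoly, powersetCard_zero, sum_singleton, sdiff_empty,
    qCross, prod_empty, C_1, one_mul, Nat.sub_zero, sub_eq_add_neg, prod_one_add, sum_powerset]
  exact sum_congr rfl hterm

lemma sum_powersetCard_succ_insert {M : Type*} [AddCommMonoid M] {j : ι} {A : Finset ι}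
    (hj : j ∉ A) (s : ℕ) (f : Finset ι → M) :
    ∑ I ∈ (insert j A).powersetCard (s + 1), f I
      = ∑ I ∈ A.powersetCard (s + 1), f I + ∑ I ∈ A.powersetCard s, f (insert j I) := by
  rw [powersetCard_succ_insert hj, sum_union, sum_image]
  · exact insert_erase_invOn.2.injOn.mono fun I hI ↦ notMem_mono (mem_powersetCard.1 hI).1 hj
  · aesop (add simp [disjoint_left, insert_subset_iff])

lemma esymm_insert_succ {j : ι} {A : Finset ι} (hj : j ∉ A) (k : ℕ) :
    ((insert j A).val.map w).esymm (k + 1)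
      = (A.val.map w).esymm (k + 1) + w j * (A.val.map w).esymm k := by
  simp only [Finset.esymm_map_val, sum_powersetCard_succ_insert hj, mul_sum]
  congr 1
  refine sum_congr rfl fun I hI => prod_insert fun hjI => hj ?_
  exact (mem_powersetCard.1 hI).1 hjI

lemma eval_crossPoly_insert_succ (hq0 : q ≠ 0) {j : ι} {A : Finset ι} (hj : j ∉ A)
    (hw : ∀ b ∈ A, w b ≠ w j) (hwj : w j ≠ 0) (s : ℕ) :
    (crossPoly q w (insert j A) (s + 1)).eval (w j)⁻¹
      = (q : ℂ) ^ (#A - s) * (crossPoly q w A s).eval ((q : ℂ) * w j)⁻¹ := by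
  have hvanish : ∑ I ∈ A.powersetCard (s + 1),
      qCross q w I (insert j A \ I) * ∏ b ∈ insert j A \ I, (1 - (w j)⁻¹ * w b) = 0 := by
    refine sum_eq_zero fun I hI => mul_eq_zero_of_right _ (prod_eq_zero (i := j) ?_ ?_)
    · exact mem_sdiff.2 ⟨mem_insert_self j A, notMem_mono (mem_powersetCard.1 hI).1 hj⟩
    · rw [inv_mul_cancel₀ hwj, sub_self]
  rw [eval_crossPoly, eval_crossPoly, sum_powersetCard_succ_insert hj, hvanish, zero_add,
    mul_sum]
  refine sum_congr rfl fun I hI => ?_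
  obtain ⟨hIA, hIs⟩ := mem_powersetCard.1 hI
  have hjI : j ∉ I := notMem_mono hIA hj
  have hfactor : ∀ b ∈ A \ I, ((q : ℂ) * w j - w b) / (w j - w b) * (1 - (w j)⁻¹ * w b)
      = q * (1 - ((q : ℂ) * w j)⁻¹ * w b) := fun b hb => by
    have : w j - w b ≠ 0 := sub_ne_zero.2 (hw b (mem_sdiff.1 hb).1).symm
    have : (q : ℂ) ≠ 0 := Complex.ofReal_ne_zero.2 hq0
    field_simp
  rw [insert_sdiff_insert, sdiff_insert_of_notMem hj]
  calc qCross q w (insert j I) (A \ I) * ∏ b ∈ A \ I, (1 - (w j)⁻¹ * w b)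
      = qCross q w I (A \ I)
          * ∏ b ∈ A \ I, ((q : ℂ) * w j - w b) / (w j - w b) * (1 - (w j)⁻¹ * w b) := by
        simp only [qCross, prod_insert hjI, prod_mul_distrib]
        ring
    _ = (q : ℂ) ^ (#A - s)
          * (qCross q w I (A \ I) * ∏ b ∈ A \ I, (1 - (q * w j)⁻¹ * w b)) := by
        rw [prod_congr rfl hfactor, prod_mul_distrib, prod_const, card_sdiff_of_subset hIA, hIs]
        ring

lemma eval_qbinomEsymmPoly_insert_succ (hq : |q| < 1) (hq0 : q ≠ 0) {j : ι} {A : Finset ι}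
    (hj : j ∉ A) (hwj : w j ≠ 0) {s : ℕ} (hs : s ≤ #A) :
    (qbinomEsymmPoly q w (insert j A) (s + 1)).eval (w j)⁻¹
      = (q : ℂ) ^ (#A - s) * (qbinomEsymmPoly q w A s).eval ((q : ℂ) * w j)⁻¹ := by
  rw [eval_qbinomEsymmPoly, eval_qbinomEsymmPoly, card_insert_of_notMem hj, mul_inv,
    Nat.add_sub_add_right]
  exact sum_qbinom_shift hq hq0 hs _ _ (mul_inv_cancel₀ hwj) (by simp [Multiset.esymm])
    (esymm_insert_succ hj)

theorem crossPoly_eq_qbinomEsymmPoly (hq : |q| < 1) (hq0 : q ≠ 0) {A : Finset ι}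
    (hinj : Set.InjOn w A) (h0 : ∀ i ∈ A, w i ≠ 0) {s : ℕ} (hs : s ≤ #A) :
    crossPoly q w A s = qbinomEsymmPoly q w A s := by
  induction s generalizing A with
  | zero => exact crossPoly_zero hq A
  | succ s ih =>
    refine eq_of_natDegree_lt_card_of_eval_eq' _ _ (A.image fun i => (w i)⁻¹) ?_ ?_
    · simp only [mem_image, forall_exists_index, and_imp, forall_apply_eq_imp_iff₂]
      intro j hj
      have hcard : s ≤ #(A.erase j) := by rw [card_erase_of_mem hj]; omega
      have hne : ∀ b ∈ A.erase j, w b ≠ w j := fun b hb h =>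
        ne_of_mem_erase hb (hinj (mem_of_mem_erase hb) hj h)
      rw [← insert_erase hj, eval_crossPoly_insert_succ hq0 (notMem_erase j A) hne (h0 j hj),
        eval_qbinomEsymmPoly_insert_succ hq hq0 (notMem_erase j A) (h0 j hj) hcard,
        ih (hinj.mono (erase_subset j A)) (fun i hi => h0 i (mem_of_mem_erase hi)) hcard]
    · rw [card_image_of_injOn fun i hi j hj h => hinj hi hj (inv_injective h)]
      have := natDegree_crossPoly_le q w A (s + 1)
      have := natDegree_qbinomEsymmPoly_le q w A (s + 1)
      omega

end CrossPoly

section Bfin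

variable {q : ℝ} {n : ℕ} {w : Fin n → ℂ}

variable (q w) in
def bFactor (i j : Fin n) : ℂ :=
  if i < j then (w i - w j) / ((q : ℂ) * w i - w j) else 1

lemma Bfin_eq_prod_bFactor (S : Finset (Fin n)) :
    Bfin q w S = ∏ i ∈ S, ∏ j ∈ S, bFactor q w i j := rfl

lemma Bfin_union {S T : Finset (Fin n)} (h : Disjoint S T) :
    Bfin q w (S ∪ T) = Bfin q w S * Bfin q w T
      * ∏ a ∈ S, ∏ b ∈ T, bFactor q w a b * bFactor q w b a := by
  simp only [Bfin_eq_prod_bFactor, prod_union h, prod_mul_distrib]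
  rw [prod_comm (s := T) (t := S)]
  ring

lemma bFactor_mul_bFactor_mul_div {a b : Fin n} (hab : a ≠ b) (hw : w a ≠ w b)
    (hqw : (q : ℂ) * w a ≠ w b) :
    bFactor q w a b * bFactor q w b a * (((q : ℂ) * w a - w b) / (w a - w b))
      = if b < a then -(((q : ℂ) * w a - w b) / ((q : ℂ) * w b - w a)) else 1 := by
  have hw' : w a - w b ≠ 0 := sub_ne_zero.2 hw
  have hqw' : (q : ℂ) * w a - w b ≠ 0 := sub_ne_zero.2 hqw
  rcases hab.lt_or_gt with hlt | hgt
  · simp only [bFactor, if_pos hlt, if_neg hlt.asymm]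
    rw [mul_one, div_mul_div_cancel₀ hqw', div_self hw']
  · simp only [bFactor, if_pos hgt, if_neg hgt.asymm]
    rw [one_mul, ← neg_sub (w a) (w b), neg_div, neg_mul, div_mul_div_comm,
      mul_comm (w a - w b), mul_div_mul_right _ _ hw']

lemma Gpair_eq (hinj : Function.Injective w) (hw : ∀ i j, i ≠ j → (q : ℂ) * w i ≠ w j)
    {S T : Finset (Fin n)} (h : Disjoint S T) :
    Gpair q w S T
      = (∏ a ∈ S, ∏ b ∈ T, bFactor q w a b * bFactor q w b a) * qCross q w S T := by
  rw [Gpair, qCross, ← prod_mul_distrib]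
  refine prod_congr rfl fun a ha => ?_
  rw [← prod_mul_distrib]
  refine prod_congr rfl fun b hb => ?_
  have hab : a ≠ b := fun hab => disjoint_left.1 h ha (hab ▸ hb)
  exact (bFactor_mul_bFactor_mul_div hab (hinj.ne hab) (hw a b hab)).symm

lemma Bfin_mul_Bfin_mul_Gpair (hinj : Function.Injective w)
    (hw : ∀ i j, i ≠ j → (q : ℂ) * w i ≠ w j) (I : Finset (Fin n)) :
    Bfin q w I * Bfin q w Iᶜ * Gpair q w I Iᶜ = Bfin q w univ * qCross q w I Iᶜ := by
  rw [Gpair_eq hinj hw disjoint_compl_right, ← union_compl I, Bfin_union disjoint_compl_right]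
  ring

theorem sum_Bfin_mul_Gpair_of_injective (hq : |q| < 1) (hq0 : q ≠ 0)
    (hinj : Function.Injective w) (h0 : ∀ i, w i ≠ 0)
    (hw : ∀ i j, i ≠ j → (q : ℂ) * w i ≠ w j) {s : ℕ} (hs : s ≤ n) (t : ℂ) :
    (∑ I ∈ powersetCard s (univ : Finset (Fin n)),
      Bfin q w I * Bfin q w Iᶜ * (∏ j ∈ Iᶜ, (1 - t * w j)) * Gpair q w I Iᶜ)
    = Bfin q w univ * ∑ k ∈ range (n - s + 1),
        (-1 : ℂ) ^ k * ((qbinom q (n - k) s : ℝ) : ℂ) * esym w k * t ^ k := by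
  have hpoly := congrArg (eval t) <| crossPoly_eq_qbinomEsymmPoly hq hq0 hinj.injOn
    (fun i _ => h0 i) (A := univ) (s := s) (by simpa using hs)
  simp only [eval_crossPoly, eval_qbinomEsymmPoly, card_univ, Fintype.card_fin,
    ← compl_eq_univ_sdiff, Finset.esymm_map_val] at hpoly
  calc _ = ∑ I ∈ powersetCard s univ,
          Bfin q w univ * (qCross q w I Iᶜ * ∏ j ∈ Iᶜ, (1 - t * w j)) :=
        sum_congr rfl fun I _ => by rw [← mul_assoc, ← Bfin_mul_Bfin_mul_Gpair hinj hw I]; ring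
    _ = _ := by rw [← mul_sum, hpoly]; rfl

end Bfin

section Continuity

open Filter Topology

variable {q : ℝ}

lemma eventually_add_mul_ne {a b c d : ℂ} (h : a ≠ c ∨ b ≠ d) :
    ∀ᶠ ε in 𝓝[≠] (0 : ℂ), a + ε * b ≠ c + ε * d := by
  rcases eq_or_ne a c with rfl | hac
  · filter_upwards [self_mem_nhdsWithin] with ε (hε : ε ≠ 0)
    simpa [hε] using h.resolve_left (not_not.2 rfl)
  · exact nhdsWithin_le_nhds ((ContinuousAt.ne_iff_eventually_ne (by fun_prop) (by fun_prop)).1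
      (by simpa using hac))

lemma eventually_generic_add_mul {ι : Type*} [Finite ι] {w v : ι → ℂ}
    (hw : ∀ i j, i ≠ j → (q : ℂ) * w i ≠ w j) (hv : Function.Injective v)
    (hv0 : ∀ i, v i ≠ 0) :
    ∀ᶠ ε in 𝓝[≠] (0 : ℂ), Function.Injective (fun i => w i + ε * v i) ∧
      (∀ i, w i + ε * v i ≠ 0) ∧
      ∀ i j, i ≠ j → (q : ℂ) * (w i + ε * v i) ≠ w j + ε * v j := by
  have hpairs {P : ι → ι → ℂ → Prop}
      (h : ∀ i j, i ≠ j → ∀ᶠ ε in 𝓝[≠] (0 : ℂ), P i j ε) :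
      ∀ᶠ ε in 𝓝[≠] (0 : ℂ), ∀ i j, i ≠ j → P i j ε :=
    eventually_all.2 fun i => eventually_all.2 fun j => eventually_imp_distrib_left.2 (h i j)
  filter_upwards [hpairs fun i j hij => eventually_add_mul_ne (.inr (hv.ne hij)),
    eventually_all.2 fun i => eventually_add_mul_ne (c := 0) (d := 0) (.inr (hv0 i)),
    hpairs fun i j hij => eventually_add_mul_ne (b := q * v i) (.inl (hw i j hij))]
    with ε hinj h0 hqw
  refine ⟨Function.injective_iff_pairwise_ne.2 hinj, fun i => by simpa using h0 i,
    fun i j hij => ?_⟩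
  rw [mul_add, mul_left_comm]
  exact hqw i j hij

lemma eq_of_eventually_eq_add_mul {ι Y : Type*} [TopologicalSpace Y] [T2Space Y]
    {f g : (ι → ℂ) → Y} {w : ι → ℂ} (hf : ContinuousAt f w) (hg : ContinuousAt g w)
    (v : ι → ℂ)
    (h : ∀ᶠ ε in 𝓝[≠] (0 : ℂ),
      f (fun i => w i + ε * v i) = g (fun i => w i + ε * v i)) :
    f w = g w := by
  have hpath : Tendsto (fun ε : ℂ => fun i => w i + ε * v i) (𝓝[≠] 0) (𝓝 w) :=
    ((show Continuous fun ε : ℂ => fun i => w i + ε * v i by fun_prop).tendsto' 0 w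
      (by simp)).mono_left nhdsWithin_le_nhds
  exact tendsto_nhds_unique ((hf.tendsto.comp hpath).congr' h) (hg.tendsto.comp hpath)

variable {n : ℕ} {w : Fin n → ℂ}

lemma continuousAt_Bfin (hw : ∀ i j, i ≠ j → (q : ℂ) * w i ≠ w j) (S : Finset (Fin n)) :
    ContinuousAt (fun u => Bfin q u S) w := by
  refine tendsto_finsetProd _ fun i _ => tendsto_finsetProd _ fun j _ => ?_
  split_ifs with hij
  · exact ContinuousAt.div (by fun_prop) (by fun_prop) (sub_ne_zero.2 (hw i j hij.ne))
  · exact continuousAt_const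

lemma continuousAt_Gpair (hw : ∀ i j, i ≠ j → (q : ℂ) * w i ≠ w j)
    (S T : Finset (Fin n)) :
    ContinuousAt (fun u => Gpair q u S T) w := by
  refine tendsto_finsetProd _ fun a _ => tendsto_finsetProd _ fun b _ => ?_
  split_ifs with hba
  · exact ContinuousAt.neg <|
      ContinuousAt.div (by fun_prop) (by fun_prop) (sub_ne_zero.2 (hw b a hba.ne))
  · exact continuousAt_const

lemma continuousAt_sum_Bfin_mul_Gpair (hw : ∀ i j, i ≠ j → (q : ℂ) * w i ≠ w j) (s : ℕ)
    (t : ℂ) : ContinuousAt (fun u : Fin n → ℂ => ∑ I ∈ powersetCard s univ,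
      Bfin q u I * Bfin q u Iᶜ * (∏ j ∈ Iᶜ, (1 - t * u j)) * Gpair q u I Iᶜ) w := by
  refine tendsto_finsetSum _ fun I _ => ?_
  have hprod : Continuous fun u : Fin n → ℂ => ∏ j ∈ Iᶜ, (1 - t * u j) := by fun_prop
  exact (((continuousAt_Bfin hw I).mul (continuousAt_Bfin hw Iᶜ)).mul hprod.continuousAt).mul
    (continuousAt_Gpair hw I Iᶜ)

lemma continuousAt_Bfin_mul_sum_esym (hw : ∀ i j, i ≠ j → (q : ℂ) * w i ≠ w j) (s : ℕ)
    (t : ℂ) : ContinuousAt (fun u : Fin n → ℂ => Bfin q u univ * ∑ k ∈ range (n - s + 1),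
      (-1 : ℂ) ^ k * ((qbinom q (n - k) s : ℝ) : ℂ) * esym u k * t ^ k) w :=
  (continuousAt_Bfin hw univ).mul (by unfold esym; fun_prop)

end Continuity

theorem qtazrp_B_identity_two_general
    (q : ℝ) (hq0 : 0 < q) (hq1 : q < 1)
    (n : ℕ) (s : ℕ) (hs : s ≤ n) (t : ℂ) (w : Fin n → ℂ)
    (hw : ∀ i j : Fin n, i ≠ j → (q : ℂ) * w i ≠ w j) :
    (∑ I ∈ Finset.powersetCard s (Finset.univ : Finset (Fin n)),
      Bfin q w I * Bfin q w Iᶜ * (∏ j ∈ Iᶜ, (1 - t * w j)) * Gpair q w I Iᶜ)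
    = Bfin q w Finset.univ *
        ∑ k ∈ Finset.range (n - s + 1),
          (-1 : ℂ) ^ k * ((qbinom q (n - k) s : ℝ) : ℂ) * esym w k * t ^ k := by
  have hq : |q| < 1 := abs_lt.2 ⟨by linarith, hq1⟩
  have hv : Function.Injective fun i : Fin n => ((i : ℕ) : ℂ) + 1 := fun i j h => by
    simpa [Fin.ext_iff] using h
  refine eq_of_eventually_eq_add_mul (continuousAt_sum_Bfin_mul_Gpair hw s t)
    (continuousAt_Bfin_mul_sum_esym hw s t) (fun i => ((i : ℕ) : ℂ) + 1) ?_
  filter_upwards [eventually_generic_add_mul hw hv fun i => by norm_cast]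
    with ε ⟨hinj, h0, hqw⟩
  exact sum_Bfin_mul_Gpair_of_injective hq hq0.ne' hinj h0 hqw hs t

/-- **Lemma (q-TAZRP summation identity, second form).** -/
theorem qtazrp_B_identity_two
    (q : ℝ) (hq0 : 0 < q) (hq1 : q < 1)
    (n : ℕ) (hn : 1 ≤ n) (s : ℕ) (hs : s ≤ n) (t : ℂ) (w : Fin n → ℂ)
    (hw : ∀ i j : Fin n, i ≠ j → (q : ℂ) * w i ≠ w j) :
    (∑ I ∈ Finset.powersetCard s (Finset.univ : Finset (Fin n)),
      Bfin q w I * Bfin q w Iᶜ * (∏ j ∈ Iᶜ, (1 - t * w j)) * Gpair q w I Iᶜ)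
    = Bfin q w Finset.univ *
        ∑ k ∈ Finset.range (n - s + 1),
          (-1 : ℂ) ^ k * ((qbinom q (n - k) s : ℝ) : ℂ) * esym w k * t ^ k :=
  qtazrp_B_identity_two_general q hq0 hq1 n s hs t w hw
end
end
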